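/- arXiv:1304.0371 — 2 statements merged into one kernel-verified Lean document; each statement's English description precedes it below -/
import Mathlib

section
/- Let n ≥ 1 and let f : (ZMod 2)^n → ℝ be a Boolean function (f(x) ∈ {−1,1} for all x) with spectral norm ‖f̂‖₁ = A. Then there exists a nonempty affine subspace V ⊆ (ZMod 2)^n of codimension at most A² (i.e., the direction of V is a linear subspace of dimension at least n − A²) such that f is constant on V. -/
/-- The character `χ_α(x) = (-1)^{⟨α,x⟩}` on the Boolean cube `(ZMod 2)^n`. -/
noncomputable def chi {n : ℕ} (α x : Fin n → ZMod 2) : ℝ :=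
  if (∑ i, α i * x i : ZMod 2) = 0 then 1 else -1

/-- The Fourier coefficient `f̂(α) = 2^{-n} ∑_x f(x) χ_α(x)`. -/
noncomputable def fhat {n : ℕ} (f : (Fin n → ZMod 2) → ℝ) (α : Fin n → ZMod 2) : ℝ :=
  (2 ^ n : ℝ)⁻¹ * ∑ x : Fin n → ZMod 2, f x * chi α x

/-!
Induction on `n`. Write `A = ‖f̂‖₁` and `M = max_γ |f̂ γ|`; Parseval (`∑ f̂² = 1`, as `f² = 1`)
gives `1 ≤ A M`. If `f̂` has a single nonzero coefficient `β`, then `f = ±χ_β` is constant on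
`{x | ⟨β, x⟩ = 0}`, of codimension at most `1 ≤ A²`.

Otherwise let `β₁, β₂` carry the largest and second largest `|f̂|` and put `α = β₁ + β₂`.
On the hyperplane `⟨α, x⟩ = b`, a copy of `(ZMod 2)^(n-1)`, the coefficients of `f` in a pair
`{γ, γ + α}` merge into `f̂(γ) ± f̂(γ + α)`, so the spectral norms of the two restrictions add
up to `2A - D` with `D = ∑_γ min(|f̂ γ|, |f̂ (γ + α)|)`. Since `f² = 1`, the autocorrelation
`∑_γ f̂(γ) f̂(γ + α)` vanishes; its terms `γ = β₁, β₂` both equal `f̂(β₁) f̂(β₂)` and every other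
term is at most `|f̂(β₂)| · min(|f̂ γ|, |f̂ (γ + α)|)`, whence `D ≥ 2M`. So one restriction has
spectral norm at most `A - M`, and `(A - M)² + 1 ≤ A²`: each step of the induction trades one
dimension for at least one unit of `A²`.
-/

lemma zmod_two_eq_zero_or_one (a : ZMod 2) : a = 0 ∨ a = 1 := by
  revert a; decide

def zmodTwoSign : AddChar (ZMod 2) ℝ where
  toFun c := if c = 0 then 1 else -1
  map_zero_eq_one' := if_pos rfl
  map_add_eq_mul' a b := by
    obtain rfl | rfl := zmod_two_eq_zero_or_one a <;>
      obtain rfl | rfl := zmod_two_eq_zero_or_one b <;>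
      simp [show (1 : ZMod 2) + 1 = 0 from rfl]

lemma zmodTwoSign_eq_one_iff {c : ZMod 2} : zmodTwoSign c = 1 ↔ c = 0 := by
  obtain rfl | rfl := zmod_two_eq_zero_or_one c <;> norm_num [zmodTwoSign]

lemma zmodTwoSign_one : zmodTwoSign 1 = -1 := by simp [zmodTwoSign]

lemma one_add_zmodTwoSign (c : ZMod 2) : 1 + zmodTwoSign c = if c = 0 then 2 else 0 := by
  obtain rfl | rfl := zmod_two_eq_zero_or_one c <;> norm_num [zmodTwoSign]

lemma sum_one_add_zmodTwoSign_add_mul (d : ZMod 2) (G : ZMod 2 → ℝ) :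
    ∑ c, (1 + zmodTwoSign (c + d)) * G c = 2 * G d := by
  simp_rw [one_add_zmodTwoSign, CharTwo.add_eq_zero, ite_mul, zero_mul, Finset.sum_ite_eq',
    Finset.mem_univ, if_true]

section Characters

variable {n : ℕ}

lemma chi_eq_zmodTwoSign (α x : Fin n → ZMod 2) : chi α x = zmodTwoSign (α ⬝ᵥ x) := rfl

lemma chi_comm (α x : Fin n → ZMod 2) : chi α x = chi x α := by
  rw [chi_eq_zmodTwoSign, chi_eq_zmodTwoSign, dotProduct_comm]

lemma chi_add_left (α β x : Fin n → ZMod 2) : chi (α + β) x = chi α x * chi β x := by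
  simp only [chi_eq_zmodTwoSign, add_dotProduct, AddChar.map_add_eq_mul]

lemma chi_add_right (α x y : Fin n → ZMod 2) : chi α (x + y) = chi α x * chi α y := by
  simp only [chi_eq_zmodTwoSign, dotProduct_add, AddChar.map_add_eq_mul]

lemma sum_chi (α : Fin n → ZMod 2) :
    ∑ x, chi α x = if α = 0 then (2 ^ n : ℝ) else 0 := by
  let ψ : AddChar (Fin n → ZMod 2) ℝ :=
    zmodTwoSign.compAddMonoidHom (AddMonoidHom.mk' (α ⬝ᵥ ·) (dotProduct_add α))
  have hψ : ψ = 0 ↔ α = 0 := by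
    simp [ψ, AddChar.eq_zero_iff, zmodTwoSign_eq_one_iff, dotProduct_eq_zero_iff]
  classical
  simpa [ψ, chi_eq_zmodTwoSign, hψ] using AddChar.sum_eq_ite ψ

lemma sum_chi_mul_chi (x y : Fin n → ZMod 2) :
    ∑ γ, chi γ x * chi γ y = if x = y then (2 ^ n : ℝ) else 0 := by
  simp_rw [← chi_add_right, chi_comm _ (x + y), sum_chi, add_eq_zero_iff_eq_neg,
    ZModModule.neg_eq_self]

lemma fhat_mul_chi (f : (Fin n → ZMod 2) → ℝ) (α γ : Fin n → ZMod 2) :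
    fhat (fun x => f x * chi α x) γ = fhat f (γ + α) := by
  simp only [fhat, chi_add_left, mul_assoc, mul_comm (chi α _)]

theorem sum_fhat_mul_fhat (f g : (Fin n → ZMod 2) → ℝ) :
    ∑ γ, fhat f γ * fhat g γ = (2 ^ n : ℝ)⁻¹ * ∑ x, f x * g x := by
  calc ∑ γ, fhat f γ * fhat g γ
      = (2 ^ n : ℝ)⁻¹ * (2 ^ n : ℝ)⁻¹ * ∑ y, ∑ x, f x * g y * ∑ γ, chi γ x * chi γ y := by
        simp only [fhat, Finset.mul_sum, Finset.sum_mul]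
        rw [Finset.sum_comm]
        refine Finset.sum_congr rfl fun y _ => ?_
        rw [Finset.sum_comm]
        exact Finset.sum_congr rfl fun x _ => Finset.sum_congr rfl fun γ _ => by ring
    _ = (2 ^ n : ℝ)⁻¹ * ∑ x, f x * g x := by
        simp only [sum_chi_mul_chi, mul_ite, mul_zero, Finset.sum_ite_eq', Finset.mem_univ,
          if_true, Finset.mul_sum]
        refine Finset.sum_congr rfl fun x _ => ?_
        field_simp

theorem sum_fhat_mul_chi (f : (Fin n → ZMod 2) → ℝ) (x : Fin n → ZMod 2) :
    ∑ γ, fhat f γ * chi γ x = f x := by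
  have hδ : ∀ γ, fhat (fun y => if y = x then (2 ^ n : ℝ) else 0) γ = chi γ x := by
    intro γ
    simp [fhat, ite_mul]
  have := sum_fhat_mul_fhat f (fun y => if y = x then (2 ^ n : ℝ) else 0)
  simp only [hδ, mul_ite, mul_zero, Finset.sum_ite_eq', Finset.mem_univ, if_true] at this
  rw [this]
  field_simp

end Characters

lemma abs_add_add_abs_sub (a b : ℝ) : |a + b| + |a - b| = 2 * max |a| |b| := by
  rcases abs_cases a with ⟨ha, ha'⟩ | ⟨ha, ha'⟩ <;>
    rcases abs_cases b with ⟨hb, hb'⟩ | ⟨hb, hb'⟩ <;>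
    rcases abs_cases (a + b) with ⟨hab, hab₀⟩ | ⟨hab, hab₀⟩ <;>
    rcases abs_cases (a - b) with ⟨hab', hab'₀⟩ | ⟨hab', hab'₀⟩ <;>
    simp only [ha, hb, hab, hab', max_def] <;> split_ifs <;> linarith

lemma abs_sum_mul_le_mul_sum_min {ι : Type*} [Fintype ι] [DecidableEq ι] {a b : ι → ℝ}
    (h : ∑ j, a j * b j = 0) (s : Finset ι) {c : ℝ} (hc : 0 ≤ c)
    (hs : ∀ j ∉ s, |a j| ≤ c ∧ |b j| ≤ c) :
    |∑ j ∈ s, a j * b j| ≤ c * ∑ j, min |a j| |b j| := by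
  have hterm : ∀ j ∉ s, |a j * b j| ≤ c * min |a j| |b j| := by
    intro j hj
    rw [abs_mul, ← min_mul_max, mul_comm c]
    exact mul_le_mul_of_nonneg_left (max_le (hs j hj).1 (hs j hj).2) (by positivity)
  calc |∑ j ∈ s, a j * b j| = |∑ j ∈ sᶜ, a j * b j| := by
        rw [eq_neg_of_add_eq_zero_left ((Finset.sum_add_sum_compl s _).trans h), abs_neg]
    _ ≤ ∑ j ∈ sᶜ, |a j * b j| := Finset.abs_sum_le_sum_abs _ _
    _ ≤ ∑ j ∈ sᶜ, c * min |a j| |b j| :=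
        Finset.sum_le_sum fun j hj => hterm j (Finset.mem_compl.mp hj)
    _ ≤ ∑ j, c * min |a j| |b j| :=
        Finset.sum_le_sum_of_subset_of_nonneg (Finset.subset_univ _) fun j _ _ => by positivity
    _ = c * ∑ j, min |a j| |b j| := (Finset.mul_sum ..).symm

lemma exists_max_and_second_max {ι : Type*} [Fintype ι] [DecidableEq ι] (a : ι → ℝ)
    (h : ∃ k₁ k₂, a k₁ ≠ 0 ∧ a k₂ ≠ 0 ∧ k₁ ≠ k₂) :
    ∃ j₁ j₂, j₁ ≠ j₂ ∧ a j₂ ≠ 0 ∧ (∀ j, |a j| ≤ |a j₁|) ∧ ∀ j ≠ j₁, |a j| ≤ |a j₂| := by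
  obtain ⟨k₁, k₂, hk₁, hk₂, hk⟩ := h
  obtain ⟨j₁, -, hj₁⟩ := Finset.exists_max_image Finset.univ (|a ·|) ⟨k₁, Finset.mem_univ _⟩
  obtain ⟨k, hkj₁, hk0⟩ : ∃ k ≠ j₁, a k ≠ 0 := by
    by_cases h₁ : k₁ = j₁
    · exact ⟨k₂, h₁ ▸ hk.symm, hk₂⟩
    · exact ⟨k₁, h₁, hk₁⟩
  obtain ⟨j₂, hj₂, hmax₂⟩ := Finset.exists_max_image (Finset.univ.erase j₁) (|a ·|)
    ⟨k, Finset.mem_erase.mpr ⟨hkj₁, Finset.mem_univ _⟩⟩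
  refine ⟨j₁, j₂, (Finset.ne_of_mem_erase hj₂).symm, ?_, fun j => hj₁ j (Finset.mem_univ j),
    fun j hj => hmax₂ j (Finset.mem_erase.mpr ⟨hj, Finset.mem_univ j⟩)⟩
  have := hmax₂ k (Finset.mem_erase.mpr ⟨hkj₁, Finset.mem_univ _⟩)
  exact abs_pos.mp ((abs_pos.mpr hk0).trans_le this)

noncomputable def fourierL1Norm {n : ℕ} (f : (Fin n → ZMod 2) → ℝ) : ℝ := ∑ γ, |fhat f γ|

section Boolean

variable {n : ℕ} {f : (Fin n → ZMod 2) → ℝ}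

lemma fourierL1Norm_nonneg (f : (Fin n → ZMod 2) → ℝ) : 0 ≤ fourierL1Norm f :=
  Finset.sum_nonneg fun γ _ => abs_nonneg (fhat f γ)

lemma abs_fhat_le_fourierL1Norm (γ : Fin n → ZMod 2) : |fhat f γ| ≤ fourierL1Norm f :=
  Finset.single_le_sum (fun γ _ => abs_nonneg (fhat f γ)) (Finset.mem_univ γ)

theorem sum_fhat_mul_fhat_add (hf : ∀ x, f x ^ 2 = 1) (α : Fin n → ZMod 2) :
    ∑ γ, fhat f γ * fhat f (γ + α) = if α = 0 then 1 else 0 := by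
  simp_rw [← fhat_mul_chi f α, sum_fhat_mul_fhat, ← mul_assoc, ← sq, hf, one_mul, sum_chi]
  split_ifs <;> simp

theorem sum_fhat_sq (hf : ∀ x, f x ^ 2 = 1) : ∑ γ, fhat f γ ^ 2 = 1 := by
  simpa [sq] using sum_fhat_mul_fhat_add hf 0

lemma one_le_fourierL1Norm_mul (hf : ∀ x, f x ^ 2 = 1) {M : ℝ} (hM : ∀ γ, |fhat f γ| ≤ M) :
    1 ≤ fourierL1Norm f * M := by
  calc 1 = ∑ γ, |fhat f γ| * |fhat f γ| := by simp_rw [abs_mul_abs_self, ← sq, sum_fhat_sq hf]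
    _ ≤ ∑ γ, |fhat f γ| * M := by gcongr with γ; exact hM γ
    _ = fourierL1Norm f * M := (Finset.sum_mul ..).symm

theorem two_mul_abs_fhat_le_sum_min (hf : ∀ x, f x ^ 2 = 1) {β₁ β₂ : Fin n → ZMod 2}
    (hne : β₁ ≠ β₂) (hβ₂ : fhat f β₂ ≠ 0) (hmax : ∀ γ ≠ β₁, |fhat f γ| ≤ |fhat f β₂|) :
    2 * |fhat f β₁| ≤ ∑ γ, min |fhat f γ| |fhat f (γ + (β₁ + β₂))| := by
  have hα : β₁ + β₂ ≠ 0 := by rwa [Ne, add_eq_zero_iff_eq_neg, ZModModule.neg_eq_self]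
  have h₁ : β₁ + (β₁ + β₂) = β₂ := by rw [← add_assoc, ZModModule.add_self, zero_add]
  have h₂ : β₂ + (β₁ + β₂) = β₁ := by rw [add_comm β₁, ← add_assoc, ZModModule.add_self, zero_add]
  have hout : ∀ γ ∉ ({β₁, β₂} : Finset _),
      |fhat f γ| ≤ |fhat f β₂| ∧ |fhat f (γ + (β₁ + β₂))| ≤ |fhat f β₂| := by
    intro γ hγ
    simp only [Finset.mem_insert, Finset.mem_singleton, not_or] at hγ
    refine ⟨hmax γ hγ.1, hmax _ fun h => hγ.2 ?_⟩
    calc γ = γ + (β₁ + β₂) + (β₁ + β₂) := by rw [add_assoc, ZModModule.add_self, add_zero]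
      _ = β₂ := by rw [h, h₁]
  have key := abs_sum_mul_le_mul_sum_min (by simp [sum_fhat_mul_fhat_add hf, hα])
    {β₁, β₂} (abs_nonneg _) hout
  rw [Finset.sum_pair hne, h₁, h₂, mul_comm (fhat f β₂), ← two_mul, abs_mul, abs_mul,
    abs_two] at key
  exact le_of_mul_le_mul_left (by linarith) (abs_pos.mpr hβ₂)

theorem exists_coset_const_of_fhat_support_subsingleton (hf : ∀ x, f x ^ 2 = 1)
    (hsupp : ∀ β₁ β₂, fhat f β₁ ≠ 0 → fhat f β₂ ≠ 0 → β₁ = β₂) :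
    ∃ (W : Submodule (ZMod 2) (Fin n → ZMod 2)) (v : Fin n → ZMod 2),
      (n : ℝ) - fourierL1Norm f ^ 2 ≤ Module.finrank (ZMod 2) W ∧ ∀ x ∈ W, f (v + x) = f v := by
  obtain ⟨β, hβ⟩ : ∃ β, fhat f β ≠ 0 := by
    by_contra! h
    simpa [h] using sum_fhat_sq hf
  have hfβ : ∀ x, f x = fhat f β * chi β x := by
    intro x
    rw [← sum_fhat_mul_chi f x, Finset.sum_eq_single β]
    · intro γ _ hγ
      rw [not_ne_iff.mp fun h => hγ (hsupp γ β h hβ), zero_mul]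
    · simp
  let φ := dotProductBilin (ZMod 2) (ZMod 2) β
  refine ⟨LinearMap.ker φ, 0, ?_, ?_⟩
  · have hrank := φ.finrank_range_add_finrank_ker
    have hrange : Module.finrank (ZMod 2) (LinearMap.range φ) ≤ 1 :=
      (Submodule.finrank_le _).trans (Module.finrank_self _).le
    rw [Module.finrank_fin_fun] at hrank
    have hA := one_le_fourierL1Norm_mul hf abs_fhat_le_fourierL1Norm
    have : (n : ℝ) ≤ Module.finrank (ZMod 2) (LinearMap.ker φ) + 1 := by exact_mod_cast (by omega)
    nlinarith
  · intro x hx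
    have hx : β ⬝ᵥ x = 0 := hx
    rw [zero_add, hfβ x, hfβ 0, chi_eq_zmodTwoSign, chi_eq_zmodTwoSign, hx, dotProduct_zero]

end Boolean

section Hyperplane

variable {m : ℕ} (i : Fin (m + 1))

lemma sum_eq_sum_sum_insertNth (F : (Fin (m + 1) → ZMod 2) → ℝ) :
    ∑ x, F x = ∑ c, ∑ y, F (i.insertNth c y) := by
  rw [← (Fin.insertNthEquiv (fun _ => ZMod 2) i).sum_comp, Fintype.sum_prod_type]
  rfl

lemma dotProduct_insertNth (γ : Fin (m + 1) → ZMod 2) (c : ZMod 2) (y : Fin m → ZMod 2) :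
    γ ⬝ᵥ i.insertNth c y = γ i * c + i.removeNth γ ⬝ᵥ y := by
  simp [dotProduct, Fin.sum_univ_succAbove _ i, Fin.removeNth]

variable (α : Fin (m + 1) → ZMod 2)

/-- When `α i = 1`, this parametrizes the hyperplane `α ⬝ᵥ x = 0` by the coordinates `≠ i`, and
`hyperplaneRestrict i α f b` is `f` on the parallel hyperplane `α ⬝ᵥ x = b`. -/
def hyperplaneEmbedding : (Fin m → ZMod 2) →ₗ[ZMod 2] (Fin (m + 1) → ZMod 2) where
  toFun y := i.insertNth (i.removeNth α ⬝ᵥ y) y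
  map_add' y z := by rw [dotProduct_add, Fin.insertNth_add]
  map_smul' c y := by
    ext j
    induction j using i.succAboveCases <;> simp [dotProduct_smul]

lemma hyperplaneEmbedding_apply (y : Fin m → ZMod 2) :
    hyperplaneEmbedding i α y = i.insertNth (i.removeNth α ⬝ᵥ y) y := rfl

lemma hyperplaneEmbedding_injective : Function.Injective (hyperplaneEmbedding i α) := by
  intro y z h
  simpa [hyperplaneEmbedding_apply] using congrArg i.removeNth h

def hyperplaneRestrict (f : (Fin (m + 1) → ZMod 2) → ℝ) (b : ZMod 2) :
    (Fin m → ZMod 2) → ℝ :=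
  fun y => f (Pi.single i b + hyperplaneEmbedding i α y)

lemma hyperplaneRestrict_apply (f : (Fin (m + 1) → ZMod 2) → ℝ) (b : ZMod 2)
    (y : Fin m → ZMod 2) :
    hyperplaneRestrict i α f b y = f (i.insertNth (b + i.removeNth α ⬝ᵥ y) y) := by
  rw [hyperplaneRestrict, hyperplaneEmbedding_apply, ← Fin.insertNth_zero_right,
    ← Fin.insertNth_add, zero_add]

variable {i α}

theorem sum_eq_sum_insertNth_zero_add (hα : α i = 1) (F : (Fin (m + 1) → ZMod 2) → ℝ) :
    ∑ γ, F γ = ∑ β, (F (i.insertNth 0 β) + F (i.insertNth 0 β + α)) := by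
  have hshift : ∀ β, i.insertNth 0 β + α = i.insertNth 1 (β + i.removeNth α) := by
    intro β
    conv_lhs => rw [← Fin.insertNth_self_removeNth i α, hα]
    rw [← Fin.insertNth_add, zero_add]
  rw [Finset.sum_add_distrib, sum_eq_sum_sum_insertNth i,
    show ∀ G : ZMod 2 → ℝ, ∑ c, G c = G 0 + G 1 from Fin.sum_univ_two]
  simp only [hshift]
  exact congrArg _
    (Equiv.sum_comp (Equiv.addRight (i.removeNth α)) (fun β => F (i.insertNth 1 β))).symm

theorem fhat_hyperplaneRestrict (hα : α i = 1) (f : (Fin (m + 1) → ZMod 2) → ℝ) (b : ZMod 2)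
    (β : Fin m → ZMod 2) :
    fhat (hyperplaneRestrict i α f b) β
      = fhat f (i.insertNth 0 β) + zmodTwoSign b * fhat f (i.insertNth 0 β + α) := by
  have hdot : ∀ c y, α ⬝ᵥ i.insertNth c y = c + i.removeNth α ⬝ᵥ y := by
    intro c y; rw [dotProduct_insertNth, hα, one_mul]
  have hchi : ∀ c y, chi (i.insertNth 0 β) (i.insertNth c y) = chi β y := by
    intro c y; rw [chi_eq_zmodTwoSign, chi_eq_zmodTwoSign, dotProduct_insertNth]; simp
  -- `1 + zmodTwoSign (b + α ⬝ᵥ x)` is twice the indicator of the hyperplane `α ⬝ᵥ x = b`.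
  symm
  calc fhat f (i.insertNth 0 β) + zmodTwoSign b * fhat f (i.insertNth 0 β + α)
      = (2 ^ (m + 1) : ℝ)⁻¹ * ∑ x, (1 + zmodTwoSign (b + α ⬝ᵥ x)) *
          (f x * chi (i.insertNth 0 β) x) := by
        simp only [fhat, chi_add_left, Finset.mul_sum, ← Finset.sum_add_distrib]
        refine Finset.sum_congr rfl fun x _ => ?_
        rw [AddChar.map_add_eq_mul, ← chi_eq_zmodTwoSign]
        ring
    _ = (2 ^ (m + 1) : ℝ)⁻¹ * ∑ y, ∑ c, (1 + zmodTwoSign (c + (b + i.removeNth α ⬝ᵥ y))) *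
          (f (i.insertNth c y) * chi β y) := by
        rw [sum_eq_sum_sum_insertNth i, Finset.sum_comm]
        simp only [hdot, hchi, add_left_comm b]
    _ = fhat (hyperplaneRestrict i α f b) β := by
        simp only [sum_one_add_zmodTwoSign_add_mul, fhat, hyperplaneRestrict_apply,
          ← Finset.mul_sum, pow_succ]
        field_simp

theorem exists_fourierL1Norm_hyperplaneRestrict_le (hα : α i = 1)
    (f : (Fin (m + 1) → ZMod 2) → ℝ) :
    ∃ b, fourierL1Norm (hyperplaneRestrict i α f b)
      ≤ fourierL1Norm f - (∑ γ, min |fhat f γ| |fhat f (γ + α)|) / 2 := by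
  set a : (Fin m → ZMod 2) → ℝ := fun β => fhat f (i.insertNth 0 β)
  set c : (Fin m → ZMod 2) → ℝ := fun β => fhat f (i.insertNth 0 β + α)
  have h₀ : fourierL1Norm (hyperplaneRestrict i α f 0) = ∑ β, |a β + c β| := by
    simp [fourierL1Norm, fhat_hyperplaneRestrict hα, a, c]
  have h₁ : fourierL1Norm (hyperplaneRestrict i α f 1) = ∑ β, |a β - c β| := by
    simp [fourierL1Norm, fhat_hyperplaneRestrict hα, zmodTwoSign_one, a, c, sub_eq_add_neg]
  have hA : fourierL1Norm f = ∑ β, (|a β| + |c β|) :=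
    sum_eq_sum_insertNth_zero_add hα _
  have hD : ∑ γ, min |fhat f γ| |fhat f (γ + α)| = 2 * ∑ β, min |a β| |c β| := by
    rw [sum_eq_sum_insertNth_zero_add hα, Finset.mul_sum]
    refine Finset.sum_congr rfl fun β _ => ?_
    rw [add_assoc, ZModModule.add_self, add_zero, min_comm]
    ring
  have hsum : fourierL1Norm (hyperplaneRestrict i α f 0)
      + fourierL1Norm (hyperplaneRestrict i α f 1)
      = 2 * (fourierL1Norm f - (∑ γ, min |fhat f γ| |fhat f (γ + α)|) / 2) := by
    have hpair : ∀ β, |a β + c β| + |a β - c β|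
        = 2 * (|a β| + |c β|) - 2 * min |a β| |c β| := by
      intro β
      rw [abs_add_add_abs_sub, ← min_add_max |a β| |c β|]
      ring
    rw [h₀, h₁, hA, hD, ← Finset.sum_add_distrib]
    simp only [hpair, Finset.sum_sub_distrib, ← Finset.mul_sum]
    ring
  rcases le_total (fourierL1Norm (hyperplaneRestrict i α f 0))
    (fourierL1Norm (hyperplaneRestrict i α f 1)) with h | h
  · exact ⟨0, by linarith⟩
  · exact ⟨1, by linarith⟩

theorem exists_hyperplaneRestrict_fourierL1Norm_sq_add_one_le
    {f : (Fin (m + 1) → ZMod 2) → ℝ} (hf : ∀ x, f x ^ 2 = 1)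
    (h : ∃ β₁ β₂, fhat f β₁ ≠ 0 ∧ fhat f β₂ ≠ 0 ∧ β₁ ≠ β₂) :
    ∃ i α b, fourierL1Norm (hyperplaneRestrict i α f b) ^ 2 + 1 ≤ fourierL1Norm f ^ 2 := by
  obtain ⟨β₁, β₂, hne, hβ₂, hmax₁, hmax₂⟩ := exists_max_and_second_max (fhat f) h
  obtain ⟨i, hi⟩ := Function.ne_iff.mp hne
  have hαi : (β₁ + β₂) i = 1 :=
    (zmod_two_eq_zero_or_one _).resolve_left (by rwa [Pi.add_apply, CharTwo.add_eq_zero])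
  obtain ⟨b, hb⟩ := exists_fourierL1Norm_hyperplaneRestrict_le hαi f
  have hD := two_mul_abs_fhat_le_sum_min hf hne hβ₂ hmax₂
  have hAM := one_le_fourierL1Norm_mul hf hmax₁
  have hMA := abs_fhat_le_fourierL1Norm (f := f) β₁
  refine ⟨i, β₁ + β₂, b, ?_⟩
  calc fourierL1Norm (hyperplaneRestrict i (β₁ + β₂) f b) ^ 2 + 1
      ≤ (fourierL1Norm f - |fhat f β₁|) ^ 2 + 1 := by
        gcongr
        · exact fourierL1Norm_nonneg _
        · linarith
    _ ≤ fourierL1Norm f ^ 2 := by nlinarith [abs_nonneg (fhat f β₁)]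

end Hyperplane

theorem exists_coset_const_finrank_ge (n : ℕ) (f : (Fin n → ZMod 2) → ℝ)
    (hf : ∀ x, f x ^ 2 = 1) :
    ∃ (W : Submodule (ZMod 2) (Fin n → ZMod 2)) (v : Fin n → ZMod 2),
      (n : ℝ) - fourierL1Norm f ^ 2 ≤ Module.finrank (ZMod 2) W ∧ ∀ x ∈ W, f (v + x) = f v := by
  induction n with
  | zero =>
    exact exists_coset_const_of_fhat_support_subsingleton hf fun _ _ _ _ => Subsingleton.elim _ _
  | succ m ih =>
    by_cases hsupp : ∀ β₁ β₂, fhat f β₁ ≠ 0 → fhat f β₂ ≠ 0 → β₁ = β₂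
    · exact exists_coset_const_of_fhat_support_subsingleton hf hsupp
    push Not at hsupp
    obtain ⟨i, α, b, hnorm⟩ := exists_hyperplaneRestrict_fourierL1Norm_sq_add_one_le hf hsupp
    obtain ⟨W, v, hW, hconst⟩ := ih (hyperplaneRestrict i α f b) fun y => hf _
    let L := hyperplaneEmbedding i α
    refine ⟨W.map L, Pi.single i b + L v, ?_, ?_⟩
    · rw [← (Submodule.equivMapOfInjective L (hyperplaneEmbedding_injective i α) W).finrank_eq]
      push_cast
      linarith
    · rintro _ ⟨y, hy, rfl⟩
      rw [add_assoc, ← map_add]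
      exact hconst y hy

theorem constant_on_affine_subspace_general (n : ℕ)
    (f : (Fin n → ZMod 2) → ℝ) (hf : ∀ x, f x = 1 ∨ f x = -1)
    (A : ℝ) (hA : ∑ α : Fin n → ZMod 2, |fhat f α| = A) :
    ∃ (W : Submodule (ZMod 2) (Fin n → ZMod 2)) (v : Fin n → ZMod 2),
      (n : ℝ) - A ^ 2 ≤ (Module.finrank (ZMod 2) W : ℝ) ∧
      ∀ x ∈ W, f (v + x) = f v := by
  subst hA
  exact exists_coset_const_finrank_ge n f fun x => by rcases hf x with h | h <;> simp [h]

/-- **Theorem 1.1**: a Boolean function with spectral norm `A` is constant on a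
nonempty affine subspace of codimension at most `A²`. -/
theorem constant_on_affine_subspace (n : ℕ) (hn : 1 ≤ n)
    (f : (Fin n → ZMod 2) → ℝ) (hf : ∀ x, f x = 1 ∨ f x = -1)
    (A : ℝ) (hA : ∑ α : Fin n → ZMod 2, |fhat f α| = A) :
    ∃ (W : Submodule (ZMod 2) (Fin n → ZMod 2)) (v : Fin n → ZMod 2),
      (n : ℝ) - A ^ 2 ≤ (Module.finrank (ZMod 2) W : ℝ) ∧
      ∀ x ∈ W, f (v + x) = f v :=
  constant_on_affine_subspace_general n f hf A hA
end

section
/- Let z₁, z₂ ∈ ℂ be nonzero with |z₂| ≤ |z₁|. Then |z₁| + |z₂| − |z₁ + z₂| ≥ ((1 − Re(z₁·conj(z₂))/(|z₁|·|z₂|))/2) · |z₂|. Equivalently, if θ ∈ [0,π] is the angle between z₁ and z₂ (so that Re(z₁·conj(z₂)) = |z₁||z₂|·cos θ), then |z₁| + |z₂| − |z₁ + z₂| ≥ ((1 − cos θ)/2)·|z₂|. -/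
/-!
Write `a = |z₁|`, `b = |z₂|` and `c = cos θ`. By the law of cosines
`|z₁ + z₂|² = a² + b² + 2abc`, and
`(a + (1 + c) b / 2)² - |z₁ + z₂|² = (1 - c) b (a - (3 + c) b / 4) ≥ 0` because `b ≤ a`.
Hence `|z₁ + z₂| ≤ a + (1 + c) b / 2`, which rearranges to the claim.
-/

open InnerProductGeometry

theorem one_sub_div_two_mul_le_add_sub_of_sq_eq {a b c A : ℝ} (hb : 0 ≤ b) (hba : b ≤ a)
    (hc : c ≤ 1) (hc' : -1 ≤ c) (hA : A ^ 2 = a ^ 2 + b ^ 2 + 2 * a * b * c) :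
    (1 - c) / 2 * b ≤ a + b - A := by
  have hsq : A ^ 2 ≤ (a + (1 + c) / 2 * b) ^ 2 := by
    have key : (a + (1 + c) / 2 * b) ^ 2 - A ^ 2 = (1 - c) * b * (a - (3 + c) / 4 * b) := by
      rw [hA]; ring
    have : 0 ≤ (1 - c) * b * (a - (3 + c) / 4 * b) :=
      mul_nonneg (mul_nonneg (by linarith) hb) (by nlinarith)
    linarith
  have hA_le : A ≤ a + (1 + c) / 2 * b := (abs_le_of_sq_le_sq' hsq (by nlinarith)).2
  linarith

theorem one_sub_cos_angle_div_two_mul_norm_le {V : Type*} [NormedAddCommGroup V]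
    [InnerProductSpace ℝ V] {x y : V} (h : ‖y‖ ≤ ‖x‖) :
    (1 - Real.cos (angle x y)) / 2 * ‖y‖ ≤ ‖x‖ + ‖y‖ - ‖x + y‖ := by
  refine one_sub_div_two_mul_le_add_sub_of_sq_eq (norm_nonneg y) h (Real.cos_le_one _)
    (Real.neg_one_le_cos _) ?_
  rw [norm_add_sq_real, ← cos_angle_mul_norm_mul_norm]
  ring

theorem triangle_inequality_saving_general (z₁ z₂ : ℂ)
    (h : ‖z₂‖ ≤ ‖z₁‖) :
    ((1 - (z₁ * (starRingEnd ℂ) z₂).re / (‖z₁‖ * ‖z₂‖)) / 2) *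
        ‖z₂‖ ≤
      ‖z₁‖ + ‖z₂‖ - ‖z₁ + z₂‖ := by
  rw [← Complex.inner, mul_comm ‖z₁‖, ← cos_angle, angle_comm]
  exact one_sub_cos_angle_div_two_mul_norm_le h

/-- **Lemma 4.3** (geometric lemma): for nonzero complex numbers `z₁, z₂` with
`|z₂| ≤ |z₁|`, we have `|z₁| + |z₂| − |z₁ + z₂| ≥ ((1 − cos θ)/2)·|z₂|`, where
`θ` is the angle between `z₁` and `z₂`, i.e.
`cos θ = Re(z₁·conj(z₂))/(|z₁|·|z₂|)`. -/
theorem triangle_inequality_saving (z₁ z₂ : ℂ) (h₁ : z₁ ≠ 0) (h₂ : z₂ ≠ 0)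
    (h : ‖z₂‖ ≤ ‖z₁‖) :
    ((1 - (z₁ * (starRingEnd ℂ) z₂).re / (‖z₁‖ * ‖z₂‖)) / 2) *
        ‖z₂‖ ≤
      ‖z₁‖ + ‖z₂‖ - ‖z₁ + z₂‖ :=
  triangle_inequality_saving_general z₁ z₂ h
end
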